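/- arXiv:2604.20390 — 9 statements merged into one kernel-verified Lean document; each statement's English description precedes it below -/
import Mathlib

section
/- The determinant of the 4×4 matrix with rows (1, x_i, y_i, x_i·y_i) for i = 1,…,4 equals (1/12)·∑_{σ∈S_4} sign(σ)·(x_{σ(2)}−x_{σ(1)})(x_{σ(4)}−x_{σ(3)})(y_{σ(3)}−y_{σ(1)})(y_{σ(4)}−y_{σ(2)}). -/
/-!
Expanding the product, every monomial of `(x₁ - x₀)(x₃ - x₂)(y₂ - y₀)(y₃ - y₁)` is a product over
the four positions of one of the entries `1, xᵢ, yᵢ, xᵢyᵢ`, so its alternating sum over `S₄` is the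
determinant of a matrix whose columns are columns of `M`. Exactly 12 of the 16 monomials use each
column once, and each of them contributes `det M` with sign `+1`; the other 4 repeat a column and
contribute `0`. Multiplied by 12, the identity holds over any commutative ring.
-/

open Equiv Equiv.Perm

theorem Equiv.Perm.sum_fin_succ {M : Type*} [AddCommMonoid M] {n : ℕ}
    (f : Perm (Fin (n + 1)) → M) :
    ∑ σ, f σ = ∑ p, ∑ e : Perm (Fin n), f (decomposeFin.symm (p, e)) := by
  rw [← Fintype.sum_prod_type', ← Equiv.sum_comp decomposeFin.symm]

theorem twelve_mul_det_eq_sum_sign_mul {R : Type*} [CommRing R] (x y : Fin 4 → R) :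
    12 * (Matrix.of fun i j => ![1, x i, y i, x i * y i] j : Matrix (Fin 4) (Fin 4) R).det =
      ∑ σ : Perm (Fin 4), ((sign σ : ℤ) : R) *
        ((x (σ 1) - x (σ 0)) * (x (σ 3) - x (σ 2)) * (y (σ 2) - y (σ 0)) * (y (σ 3) - y (σ 1))) := by
  rw [Matrix.det_apply', Finset.mul_sum]
  -- numerals as iterated successors, so that `decomposeFin_symm_apply_succ` fires
  simp only [show (3 : Fin 4) = Fin.succ 2 from rfl, show (2 : Fin 4) = Fin.succ 1 from rfl,
    show (1 : Fin 4) = Fin.succ 0 from rfl, show (2 : Fin 3) = Fin.succ 1 from rfl,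
    show (1 : Fin 3) = Fin.succ 0 from rfl, show (1 : Fin 2) = Fin.succ 0 from rfl]
  simp only [sum_fin_succ, Fin.sum_univ_succ, Fintype.sum_unique, decomposeFin.symm_sign,
    Fin.prod_univ_succ, Fin.prod_univ_zero, decomposeFin_symm_apply_zero,
    decomposeFin_symm_apply_succ]
  simp only [↓reduceIte, default_eq, Fin.default_eq_zero, coe_one, id_eq, swap_apply_def,
    Fin.ext_iff, Fin.coe_ofNat_eq_mod, Fin.reduceSucc, Nat.reduceAdd, Nat.reduceMod, Nat.reduceEqDiff,
    Matrix.of_apply, Matrix.cons_val, Units.val_neg, Int.cast_neg, mul_neg, neg_mul]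
  ring

theorem stmt_1 {F : Type*} [Field F] [CharZero F] (x y : Fin 4 → F) :
    (Matrix.of fun i j => ![1, x i, y i, x i * y i] j : Matrix (Fin 4) (Fin 4) F).det =
      (1 / 12 : F) * ∑ σ : Equiv.Perm (Fin 4),
        ((Equiv.Perm.sign σ : ℤ) : F) *
          ((x (σ 1) - x (σ 0)) * (x (σ 3) - x (σ 2)) *
            (y (σ 2) - y (σ 0)) * (y (σ 3) - y (σ 1))) := by
  rw [← twelve_mul_det_eq_sum_sign_mul, ← mul_assoc]
  norm_num
end

section
/- For 4×2 matrices A = (a_{ij}) and B = (b_{ij}) over a commutative ring, let A⋆B be the 4×4 matrix whose i-th row is the Kronecker product (a_{i1}b_{i1}, a_{i2}b_{i1}, a_{i1}b_{i2}, a_{i2}b_{i2}). Then det(A⋆B) = det A_{12}·det A_{34}·det B_{13}·det B_{24} − det A_{13}·det A_{24}·det B_{12}·det B_{34}, where A_{ij} denotes the 2×2 submatrix of A consisting of rows i and j (and similarly for B). -/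
/-!
The columns of `A⋆B` form two blocks, `diag(b_{·1}) A` and `diag(b_{·2}) A`, so Laplace expansion
along the first two columns writes `det (A⋆B)` as `∑ ± b_I b'_{Iᶜ} [A_I] [A_{Iᶜ}]` over the six
pairs `I`. Eliminating `[A_14] [A_23]` with the Plücker relation
`[A_12] [A_34] - [A_13] [A_24] + [A_14] [A_23] = 0`, the coefficients of the two remaining products
factor as `[B_13] [B_24]` and `[B_12] [B_34]`. Here `b_I = ∏_{i ∈ I} b_{i1}`, `b'_I = ∏_{i ∈ I} b_{i2}`,
and rows are numbered from 1, so `[A_14]` is `rowMinor A 0 3`.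
-/

/-- The amalgam of two `4 × 2` matrices: its `i`-th row is the Kronecker tensor
product `(a_{i1}b_{i1}, a_{i2}b_{i1}, a_{i1}b_{i2}, a_{i2}b_{i2})` of the `i`-th rows. -/
def amalgam42 {R : Type*} [CommRing R] (A B : Matrix (Fin 4) (Fin 2) R) :
    Matrix (Fin 4) (Fin 4) R :=
  Matrix.of fun i k =>
    A i ⟨k.val % 2, by omega⟩ * B i ⟨k.val / 2, by have := k.isLt; omega⟩

namespace Matrix

variable {m R : Type*} [CommRing R]

def rowMinor (M : Matrix m (Fin 2) R) (i j : m) : R :=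
  (of ![M i, M j]).det

theorem det_of_rows_eq_rowMinor (M : Matrix m (Fin 2) R) (i j : m) :
    (of ![M i, M j]).det = rowMinor M i j :=
  rfl

theorem rowMinor_eq (M : Matrix m (Fin 2) R) (i j : m) :
    rowMinor M i j = M i 0 * M j 1 - M i 1 * M j 0 := by
  simp [rowMinor, det_fin_two]

theorem rowMinor_plucker_relation (M : Matrix (Fin 4) (Fin 2) R) :
    rowMinor M 0 1 * rowMinor M 2 3 - rowMinor M 0 2 * rowMinor M 1 3
      + rowMinor M 0 3 * rowMinor M 1 2 = 0 := by
  simp only [rowMinor_eq]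
  ring

theorem rowMinor_diagonal_mul [Fintype m] [DecidableEq m] (d : m → R) (M : Matrix m (Fin 2) R)
    (i j : m) :
    rowMinor (diagonal d * M) i j = d i * d j * rowMinor M i j := by
  simp only [rowMinor_eq, diagonal_mul]
  ring

theorem det_eq_laplace_first_two_cols (P Q : Matrix (Fin 4) (Fin 2) R) :
    (of fun i => ![P i 0, P i 1, Q i 0, Q i 1]).det =
      rowMinor P 0 1 * rowMinor Q 2 3 - rowMinor P 0 2 * rowMinor Q 1 3
        + rowMinor P 0 3 * rowMinor Q 1 2 + rowMinor P 1 2 * rowMinor Q 0 3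
        - rowMinor P 1 3 * rowMinor Q 0 2 + rowMinor P 2 3 * rowMinor Q 0 1 := by
  simp [rowMinor_eq, det_succ_row_zero, Fin.sum_univ_succ, Fin.succAbove]
  ring

end Matrix

open Matrix

theorem amalgam42_eq_diagonal_mul_blocks {R : Type*} [CommRing R]
    (A B : Matrix (Fin 4) (Fin 2) R) :
    amalgam42 A B =
      let P := diagonal (fun i => B i 0) * A
      let Q := diagonal (fun i => B i 1) * A
      of fun i => ![P i 0, P i 1, Q i 0, Q i 1] := by
  ext i k
  fin_cases k <;> simp [amalgam42, mul_comm]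

theorem stmt_2 {R : Type*} [CommRing R] (A B : Matrix (Fin 4) (Fin 2) R) :
    (amalgam42 A B).det =
      (Matrix.of ![A 0, A 1]).det * (Matrix.of ![A 2, A 3]).det *
        (Matrix.of ![B 0, B 2]).det * (Matrix.of ![B 1, B 3]).det
      - (Matrix.of ![A 0, A 2]).det * (Matrix.of ![A 1, A 3]).det *
        (Matrix.of ![B 0, B 1]).det * (Matrix.of ![B 2, B 3]).det := by
  rw [amalgam42_eq_diagonal_mul_blocks, det_eq_laplace_first_two_cols]
  simp only [det_of_rows_eq_rowMinor, rowMinor_diagonal_mul, rowMinor_eq B]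
  -- the multiplier is the `B`-weight of `[A_14] [A_23]` in the Laplace expansion
  linear_combination
    (B 0 0 * B 3 0 * B 1 1 * B 2 1 + B 1 0 * B 2 0 * B 0 1 * B 3 1) * rowMinor_plucker_relation A
end

section
/- If y_1 = y_2 and x_3 = x_6, then the determinant of the 6×6 matrix with rows (1, x_i, x_i², y_i, x_i y_i, x_i² y_i) for i = 1,…,6 completely factorises as (x_3−x_1)(x_3−x_2)(x_2−x_1)(x_6−x_4)(x_6−x_5)(x_5−x_4)·(y_4−y_1)(y_5−y_2)(y_6−y_3). -/
set_option maxRecDepth 10000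
set_option maxHeartbeats 4000000
lemma fs1_0 : Fin.succ (0 : Fin 1) = (1 : Fin 2) := by decide
lemma fs2_0 : Fin.succ (0 : Fin 2) = (1 : Fin 3) := by decide
lemma fs2_1 : Fin.succ (1 : Fin 2) = (2 : Fin 3) := by decide
lemma fs3_0 : Fin.succ (0 : Fin 3) = (1 : Fin 4) := by decide
lemma fs3_1 : Fin.succ (1 : Fin 3) = (2 : Fin 4) := by decide
lemma fs3_2 : Fin.succ (2 : Fin 3) = (3 : Fin 4) := by decide
lemma fs4_0 : Fin.succ (0 : Fin 4) = (1 : Fin 5) := by decide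
lemma fs4_1 : Fin.succ (1 : Fin 4) = (2 : Fin 5) := by decide
lemma fs4_2 : Fin.succ (2 : Fin 4) = (3 : Fin 5) := by decide
lemma fs4_3 : Fin.succ (3 : Fin 4) = (4 : Fin 5) := by decide
lemma fs5_0 : Fin.succ (0 : Fin 5) = (1 : Fin 6) := by decide
lemma fs5_1 : Fin.succ (1 : Fin 5) = (2 : Fin 6) := by decide
lemma fs5_2 : Fin.succ (2 : Fin 5) = (3 : Fin 6) := by decide
lemma fs5_3 : Fin.succ (3 : Fin 5) = (4 : Fin 6) := by decide
lemma fs5_4 : Fin.succ (4 : Fin 5) = (5 : Fin 6) := by decide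
lemma fsa1_0_0 : Fin.succAbove (0 : Fin 2) (0 : Fin 1) = (1 : Fin 2) := by decide
lemma fsa1_1_0 : Fin.succAbove (1 : Fin 2) (0 : Fin 1) = (0 : Fin 2) := by decide
lemma fsa2_0_0 : Fin.succAbove (0 : Fin 3) (0 : Fin 2) = (1 : Fin 3) := by decide
lemma fsa2_0_1 : Fin.succAbove (0 : Fin 3) (1 : Fin 2) = (2 : Fin 3) := by decide
lemma fsa2_1_0 : Fin.succAbove (1 : Fin 3) (0 : Fin 2) = (0 : Fin 3) := by decide
lemma fsa2_1_1 : Fin.succAbove (1 : Fin 3) (1 : Fin 2) = (2 : Fin 3) := by decide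
lemma fsa2_2_0 : Fin.succAbove (2 : Fin 3) (0 : Fin 2) = (0 : Fin 3) := by decide
lemma fsa2_2_1 : Fin.succAbove (2 : Fin 3) (1 : Fin 2) = (1 : Fin 3) := by decide
lemma fsa3_0_0 : Fin.succAbove (0 : Fin 4) (0 : Fin 3) = (1 : Fin 4) := by decide
lemma fsa3_0_1 : Fin.succAbove (0 : Fin 4) (1 : Fin 3) = (2 : Fin 4) := by decide
lemma fsa3_0_2 : Fin.succAbove (0 : Fin 4) (2 : Fin 3) = (3 : Fin 4) := by decide
lemma fsa3_1_0 : Fin.succAbove (1 : Fin 4) (0 : Fin 3) = (0 : Fin 4) := by decide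
lemma fsa3_1_1 : Fin.succAbove (1 : Fin 4) (1 : Fin 3) = (2 : Fin 4) := by decide
lemma fsa3_1_2 : Fin.succAbove (1 : Fin 4) (2 : Fin 3) = (3 : Fin 4) := by decide
lemma fsa3_2_0 : Fin.succAbove (2 : Fin 4) (0 : Fin 3) = (0 : Fin 4) := by decide
lemma fsa3_2_1 : Fin.succAbove (2 : Fin 4) (1 : Fin 3) = (1 : Fin 4) := by decide
lemma fsa3_2_2 : Fin.succAbove (2 : Fin 4) (2 : Fin 3) = (3 : Fin 4) := by decide
lemma fsa3_3_0 : Fin.succAbove (3 : Fin 4) (0 : Fin 3) = (0 : Fin 4) := by decide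
lemma fsa3_3_1 : Fin.succAbove (3 : Fin 4) (1 : Fin 3) = (1 : Fin 4) := by decide
lemma fsa3_3_2 : Fin.succAbove (3 : Fin 4) (2 : Fin 3) = (2 : Fin 4) := by decide
lemma fsa4_0_0 : Fin.succAbove (0 : Fin 5) (0 : Fin 4) = (1 : Fin 5) := by decide
lemma fsa4_0_1 : Fin.succAbove (0 : Fin 5) (1 : Fin 4) = (2 : Fin 5) := by decide
lemma fsa4_0_2 : Fin.succAbove (0 : Fin 5) (2 : Fin 4) = (3 : Fin 5) := by decide
lemma fsa4_0_3 : Fin.succAbove (0 : Fin 5) (3 : Fin 4) = (4 : Fin 5) := by decide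
lemma fsa4_1_0 : Fin.succAbove (1 : Fin 5) (0 : Fin 4) = (0 : Fin 5) := by decide
lemma fsa4_1_1 : Fin.succAbove (1 : Fin 5) (1 : Fin 4) = (2 : Fin 5) := by decide
lemma fsa4_1_2 : Fin.succAbove (1 : Fin 5) (2 : Fin 4) = (3 : Fin 5) := by decide
lemma fsa4_1_3 : Fin.succAbove (1 : Fin 5) (3 : Fin 4) = (4 : Fin 5) := by decide
lemma fsa4_2_0 : Fin.succAbove (2 : Fin 5) (0 : Fin 4) = (0 : Fin 5) := by decide
lemma fsa4_2_1 : Fin.succAbove (2 : Fin 5) (1 : Fin 4) = (1 : Fin 5) := by decide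
lemma fsa4_2_2 : Fin.succAbove (2 : Fin 5) (2 : Fin 4) = (3 : Fin 5) := by decide
lemma fsa4_2_3 : Fin.succAbove (2 : Fin 5) (3 : Fin 4) = (4 : Fin 5) := by decide
lemma fsa4_3_0 : Fin.succAbove (3 : Fin 5) (0 : Fin 4) = (0 : Fin 5) := by decide
lemma fsa4_3_1 : Fin.succAbove (3 : Fin 5) (1 : Fin 4) = (1 : Fin 5) := by decide
lemma fsa4_3_2 : Fin.succAbove (3 : Fin 5) (2 : Fin 4) = (2 : Fin 5) := by decide
lemma fsa4_3_3 : Fin.succAbove (3 : Fin 5) (3 : Fin 4) = (4 : Fin 5) := by decide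
lemma fsa4_4_0 : Fin.succAbove (4 : Fin 5) (0 : Fin 4) = (0 : Fin 5) := by decide
lemma fsa4_4_1 : Fin.succAbove (4 : Fin 5) (1 : Fin 4) = (1 : Fin 5) := by decide
lemma fsa4_4_2 : Fin.succAbove (4 : Fin 5) (2 : Fin 4) = (2 : Fin 5) := by decide
lemma fsa4_4_3 : Fin.succAbove (4 : Fin 5) (3 : Fin 4) = (3 : Fin 5) := by decide
lemma fsa5_0_0 : Fin.succAbove (0 : Fin 6) (0 : Fin 5) = (1 : Fin 6) := by decide
lemma fsa5_0_1 : Fin.succAbove (0 : Fin 6) (1 : Fin 5) = (2 : Fin 6) := by decide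
lemma fsa5_0_2 : Fin.succAbove (0 : Fin 6) (2 : Fin 5) = (3 : Fin 6) := by decide
lemma fsa5_0_3 : Fin.succAbove (0 : Fin 6) (3 : Fin 5) = (4 : Fin 6) := by decide
lemma fsa5_0_4 : Fin.succAbove (0 : Fin 6) (4 : Fin 5) = (5 : Fin 6) := by decide
lemma fsa5_1_0 : Fin.succAbove (1 : Fin 6) (0 : Fin 5) = (0 : Fin 6) := by decide
lemma fsa5_1_1 : Fin.succAbove (1 : Fin 6) (1 : Fin 5) = (2 : Fin 6) := by decide
lemma fsa5_1_2 : Fin.succAbove (1 : Fin 6) (2 : Fin 5) = (3 : Fin 6) := by decide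
lemma fsa5_1_3 : Fin.succAbove (1 : Fin 6) (3 : Fin 5) = (4 : Fin 6) := by decide
lemma fsa5_1_4 : Fin.succAbove (1 : Fin 6) (4 : Fin 5) = (5 : Fin 6) := by decide
lemma fsa5_2_0 : Fin.succAbove (2 : Fin 6) (0 : Fin 5) = (0 : Fin 6) := by decide
lemma fsa5_2_1 : Fin.succAbove (2 : Fin 6) (1 : Fin 5) = (1 : Fin 6) := by decide
lemma fsa5_2_2 : Fin.succAbove (2 : Fin 6) (2 : Fin 5) = (3 : Fin 6) := by decide
lemma fsa5_2_3 : Fin.succAbove (2 : Fin 6) (3 : Fin 5) = (4 : Fin 6) := by decide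
lemma fsa5_2_4 : Fin.succAbove (2 : Fin 6) (4 : Fin 5) = (5 : Fin 6) := by decide
lemma fsa5_3_0 : Fin.succAbove (3 : Fin 6) (0 : Fin 5) = (0 : Fin 6) := by decide
lemma fsa5_3_1 : Fin.succAbove (3 : Fin 6) (1 : Fin 5) = (1 : Fin 6) := by decide
lemma fsa5_3_2 : Fin.succAbove (3 : Fin 6) (2 : Fin 5) = (2 : Fin 6) := by decide
lemma fsa5_3_3 : Fin.succAbove (3 : Fin 6) (3 : Fin 5) = (4 : Fin 6) := by decide
lemma fsa5_3_4 : Fin.succAbove (3 : Fin 6) (4 : Fin 5) = (5 : Fin 6) := by decide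
lemma fsa5_4_0 : Fin.succAbove (4 : Fin 6) (0 : Fin 5) = (0 : Fin 6) := by decide
lemma fsa5_4_1 : Fin.succAbove (4 : Fin 6) (1 : Fin 5) = (1 : Fin 6) := by decide
lemma fsa5_4_2 : Fin.succAbove (4 : Fin 6) (2 : Fin 5) = (2 : Fin 6) := by decide
lemma fsa5_4_3 : Fin.succAbove (4 : Fin 6) (3 : Fin 5) = (3 : Fin 6) := by decide
lemma fsa5_4_4 : Fin.succAbove (4 : Fin 6) (4 : Fin 5) = (5 : Fin 6) := by decide
lemma fsa5_5_0 : Fin.succAbove (5 : Fin 6) (0 : Fin 5) = (0 : Fin 6) := by decide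
lemma fsa5_5_1 : Fin.succAbove (5 : Fin 6) (1 : Fin 5) = (1 : Fin 6) := by decide
lemma fsa5_5_2 : Fin.succAbove (5 : Fin 6) (2 : Fin 5) = (2 : Fin 6) := by decide
lemma fsa5_5_3 : Fin.succAbove (5 : Fin 6) (3 : Fin 5) = (3 : Fin 6) := by decide
lemma fsa5_5_4 : Fin.succAbove (5 : Fin 6) (4 : Fin 5) = (4 : Fin 6) := by decide

theorem stmt_6 {R : Type*} [CommRing R] (x y : Fin 6 → R)
    (hy : y 0 = y 1) (hx : x 2 = x 5) :
    (Matrix.of fun i j => ![1, x i, x i ^ 2, y i, x i * y i, x i ^ 2 * y i] j :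
        Matrix (Fin 6) (Fin 6) R).det =
      (x 2 - x 0) * (x 2 - x 1) * (x 1 - x 0) * (x 5 - x 3) * (x 5 - x 4) * (x 4 - x 3) *
        ((y 3 - y 0) * (y 4 - y 1) * (y 5 - y 2)) := by
  set M : Fin 6 → Fin 6 → R := fun i j => ![1, x i, x i ^ 2, y i, x i * y i, x i ^ 2 * y i] j with hM
  have h0 : ∀ i, M i 0 = 1 := fun i => rfl
  have h1 : ∀ i, M i 1 = x i := fun i => rfl
  have h2 : ∀ i, M i 2 = x i ^ 2 := fun i => rfl
  have h3 : ∀ i, M i 3 = y i := fun i => rfl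
  have h4 : ∀ i, M i 4 = x i * y i := fun i => rfl
  have h5 : ∀ i, M i 5 = x i ^ 2 * y i := fun i => rfl
  clear_value M
  simp [Matrix.det_succ_row_zero, Fin.sum_univ_succ, fs1_0, fs2_0, fs2_1, fs3_0, fs3_1, fs3_2, fs4_0, fs4_1, fs4_2, fs4_3, fs5_0, fs5_1, fs5_2, fs5_3, fs5_4, fsa1_0_0, fsa1_1_0, fsa2_0_0, fsa2_0_1, fsa2_1_0, fsa2_1_1, fsa2_2_0, fsa2_2_1, fsa3_0_0, fsa3_0_1, fsa3_0_2, fsa3_1_0, fsa3_1_1, fsa3_1_2, fsa3_2_0, fsa3_2_1, fsa3_2_2, fsa3_3_0, fsa3_3_1, fsa3_3_2, fsa4_0_0, fsa4_0_1, fsa4_0_2, fsa4_0_3, fsa4_1_0, fsa4_1_1, fsa4_1_2, fsa4_1_3, fsa4_2_0, fsa4_2_1, fsa4_2_2, fsa4_2_3, fsa4_3_0, fsa4_3_1, fsa4_3_2, fsa4_3_3, fsa4_4_0, fsa4_4_1, fsa4_4_2, fsa4_4_3, fsa5_0_0, fsa5_0_1, fsa5_0_2, fsa5_0_3, fsa5_0_4,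 fsa5_1_0, fsa5_1_1, fsa5_1_2, fsa5_1_3, fsa5_1_4, fsa5_2_0, fsa5_2_1, fsa5_2_2, fsa5_2_3, fsa5_2_4, fsa5_3_0, fsa5_3_1, fsa5_3_2, fsa5_3_3, fsa5_3_4, fsa5_4_0, fsa5_4_1, fsa5_4_2, fsa5_4_3, fsa5_4_4, fsa5_5_0, fsa5_5_1, fsa5_5_2, fsa5_5_3, fsa5_5_4]
  simp only [h0, h1, h2, h3, h4, h5]
  rw [hy, hx]
  ring
end

section
/- The determinant of the 4×4 matrix A⋆B with rows equal to Kronecker products of rows of a 4×2 matrix A and a 4×2 matrix B satisfies the symmetric formula 12·det(A⋆B) = ∑_{σ∈S_4} sign(σ)·det A_{σ(1)σ(2)}·det A_{σ(3)σ(4)}·det B_{σ(1)σ(3)}·det B_{σ(2)σ(4)}, where A_{ij} denotes the 2×2 matrix formed from rows i and j of A in that order (and similarly for B). -/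
theorem stmt_11 {R : Type*} [CommRing R] (A B : Matrix (Fin 4) (Fin 2) R) :
    (12 : R) * (amalgam42 A B).det =
      ∑ σ : Equiv.Perm (Fin 4),
        (Equiv.Perm.sign σ : ℤ) •
          ((Matrix.of ![A (σ 0), A (σ 1)]).det * (Matrix.of ![A (σ 2), A (σ 3)]).det *
            (Matrix.of ![B (σ 0), B (σ 2)]).det * (Matrix.of ![B (σ 1), B (σ 3)]).det) := by
  have h2 : (2 : Fin 4) = Fin.succ 1 := rfl
  have h3 : (3 : Fin 4) = Fin.succ 2 := rfl
  have h2' : (2 : Fin 3) = Fin.succ 1 := rfl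
  have hd : (default : Equiv.Perm (Fin 1)) = 1 := rfl
  rw [Matrix.det_apply]
  simp only [Finset.univ_perm_fin_succ, Finset.sum_map, Equiv.coe_toEmbedding,
    Fintype.sum_prod_type, Finset.univ_unique, Finset.sum_singleton, h2, h3, h2', hd,
    Equiv.Perm.decomposeFin_symm_apply_zero, Equiv.Perm.decomposeFin_symm_apply_one,
    Equiv.Perm.decomposeFin_symm_apply_succ, Equiv.Perm.decomposeFin.symm_sign,
    Fin.sum_univ_succ, Fin.sum_univ_zero, Fin.prod_univ_succ, Fin.prod_univ_zero,
    Equiv.Perm.sign_one, Equiv.Perm.coe_one, id_eq,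
    Fin.default_eq_zero, Equiv.swap_self, Equiv.refl_apply]
  norm_num [Equiv.swap_apply_def, Fin.ext_iff, Matrix.det_fin_two, amalgam42]
  rw [← h3]
  ring
end

section
/- Let A be a 6×3 matrix and B a 6×2 matrix over a ℚ-algebra, and A⋆B their 6×6 row-wise Kronecker amalgam. Then 144·det(A⋆B) = ∑_{σ∈S_6} sign(σ)·det A_{σ(1)σ(2)σ(3)}·det A_{σ(4)σ(5)σ(6)}·det B_{σ(1)σ(4)}·det B_{σ(2)σ(5)}·det B_{σ(3)σ(6)}, where A_{ijk} is the 3×3 matrix whose rows are rows i, j, k of A in that order, and B_{ij} is the 2×2 matrix whose rows are rows i, j of B in that order. -/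
section AmalgamAux

open Equiv Equiv.Perm

/-- Index type for the expansion of the five small determinants:
`t = (γ₂, γ₁, γ₀, β, α)`. -/
abbrev AmalgamAux.TT :=
  Perm (Fin 2) × Perm (Fin 2) × Perm (Fin 2) × Perm (Fin 3) × Perm (Fin 3)

namespace AmalgamAux

def decFin (x : Fin 3) (y : Fin 2) : Fin 6 := ⟨x.val + 3 * y.val, by omega⟩

/-- The column-selection function attached to `t = (γ₂, γ₁, γ₀, β, α)`. -/
def vfun (t : TT) : Fin 6 → Fin 6 :=
  ![decFin (t.2.2.2.2 0) (t.2.2.1 0), decFin (t.2.2.2.2 1) (t.2.1 0), decFin (t.2.2.2.2 2) (t.1 0),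
    decFin (t.2.2.2.1 0) (t.2.2.1 1), decFin (t.2.2.2.1 1) (t.2.1 1), decFin (t.2.2.2.1 2) (t.1 1)]

def eta (t : TT) : ℤ :=
  (sign t.1 : ℤ) * sign t.2.1 * sign t.2.2.1 * sign t.2.2.2.1 * sign t.2.2.2.2

def kappa (t : TT) : ℤ :=
  if h : Function.Injective (vfun t) then
    (sign (Equiv.mk (vfun t) (Fintype.bijInv h.bijective_of_finite)
      (Fintype.leftInverse_bijInv _) (Fintype.rightInverse_bijInv _)) : ℤ)
  else 0

set_option maxHeartbeats 4000000 in
set_option maxRecDepth 100000 in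
theorem key_sum : ∑ t : TT, eta t * kappa t = 144 := by decide

lemma vec6_five {α : Type*} (a b c d e f : α) : (![a,b,c,d,e,f] : Fin 6 → α) 5 = f := rfl

lemma det_expand {n : ℕ} {R : Type*} [CommRing R] (N : Matrix (Fin n) (Fin n) R) :
    N.det = ∑ σ : Perm (Fin n), (sign σ : ℤ) • ∏ i, N i (σ i) := by
  rw [← Matrix.det_transpose, Matrix.det_apply]
  simp [Units.smul_def, Matrix.transpose_apply]

end AmalgamAux

end AmalgamAux

/-- The amalgam of a `6 × 3` matrix `A` and a `6 × 2` matrix `B`: its `i`-th row is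
the Kronecker tensor product of row `i` of `A` with row `i` of `B`. -/
def amalgam63 {R : Type*} [CommRing R] (A : Matrix (Fin 6) (Fin 3) R)
    (B : Matrix (Fin 6) (Fin 2) R) : Matrix (Fin 6) (Fin 6) R :=
  Matrix.of fun i k =>
    A i ⟨k.val % 3, by omega⟩ * B i ⟨k.val / 3, by have := k.isLt; omega⟩

section AmalgamAux2

open Equiv Equiv.Perm

namespace AmalgamAux

lemma amalgam_dec {R : Type*} [CommRing R] (A : Matrix (Fin 6) (Fin 3) R)
    (B : Matrix (Fin 6) (Fin 2) R) (i : Fin 6) (x : Fin 3) (y : Fin 2) :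
    amalgam63 A B i (decFin x y) = A i x * B i y := by
  unfold amalgam63 decFin
  simp only [Matrix.of_apply]
  have hx := x.isLt; have hy := y.isLt
  congr 2
  · apply Fin.ext; show (x.val + 3 * y.val) % 3 = x.val; omega
  · apply Fin.ext; show (x.val + 3 * y.val) / 3 = y.val; omega

lemma stepA {R : Type*} [CommRing R] (A : Matrix (Fin 6) (Fin 3) R)
    (B : Matrix (Fin 6) (Fin 2) R) (σ : Perm (Fin 6)) :
    (Matrix.of ![A (σ 0), A (σ 1), A (σ 2)] : Matrix (Fin 3) (Fin 3) R).det *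
      (Matrix.of ![A (σ 3), A (σ 4), A (σ 5)] : Matrix (Fin 3) (Fin 3) R).det *
      (Matrix.of ![B (σ 0), B (σ 3)] : Matrix (Fin 2) (Fin 2) R).det *
      (Matrix.of ![B (σ 1), B (σ 4)] : Matrix (Fin 2) (Fin 2) R).det *
      (Matrix.of ![B (σ 2), B (σ 5)] : Matrix (Fin 2) (Fin 2) R).det =
    ∑ t : TT, eta t • ∏ p, amalgam63 A B (σ p) (vfun t p) := by
  rw [det_expand (Matrix.of ![A (σ 0), A (σ 1), A (σ 2)] : Matrix (Fin 3) (Fin 3) R),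
    det_expand (Matrix.of ![A (σ 3), A (σ 4), A (σ 5)] : Matrix (Fin 3) (Fin 3) R),
    det_expand (Matrix.of ![B (σ 0), B (σ 3)] : Matrix (Fin 2) (Fin 2) R),
    det_expand (Matrix.of ![B (σ 1), B (σ 4)] : Matrix (Fin 2) (Fin 2) R),
    det_expand (Matrix.of ![B (σ 2), B (σ 5)] : Matrix (Fin 2) (Fin 2) R)]
  simp only [Fintype.sum_prod_type]
  simp only [Finset.sum_mul, Finset.mul_sum]
  refine Finset.sum_congr rfl fun c2 _ => ?_
  refine Finset.sum_congr rfl fun c1 _ => ?_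
  refine Finset.sum_congr rfl fun c0 _ => ?_
  refine Finset.sum_congr rfl fun b _ => ?_
  refine Finset.sum_congr rfl fun a _ => ?_
  simp only [eta, vfun, Fin.prod_univ_six, Fin.prod_univ_three, Fin.prod_univ_two,
    Fin.isValue, Nat.succ_eq_add_one, Nat.reduceAdd,
    Matrix.cons_val_zero, Matrix.cons_val_one, Matrix.head_cons, Matrix.cons_val_two,
    Matrix.cons_val_three, Matrix.cons_val_four, vec6_five,
    Matrix.tail_cons, Matrix.head_fin_const, Matrix.of_apply, amalgam_dec, zsmul_eq_mul,
    Matrix.cons_val', Matrix.cons_val_fin_one, Matrix.empty_val']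
  push_cast
  ring

set_option maxRecDepth 40000 in
lemma stepC {R : Type*} [CommRing R] (M : Matrix (Fin 6) (Fin 6) R) (t : TT) :
    (M.submatrix id (vfun t)).det = kappa t • M.det := by
  unfold kappa
  by_cases h : Function.Injective (vfun t)
  · rw [dif_pos h]
    have hfe : vfun t = ⇑(Equiv.mk (vfun t) (Fintype.bijInv h.bijective_of_finite)
        (Fintype.leftInverse_bijInv _) (Fintype.rightInverse_bijInv _)) := rfl
    conv_lhs => rw [hfe]
    rw [Matrix.det_permute', zsmul_eq_mul]
  · rw [dif_neg h, zero_smul]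
    rw [Function.not_injective_iff] at h
    obtain ⟨a, b, hab, hne⟩ := h
    apply Matrix.det_zero_of_column_eq hne
    intro k
    simp [Matrix.submatrix_apply, hab]

end AmalgamAux

end AmalgamAux2

set_option maxRecDepth 40000 in
theorem stmt_12 {R : Type*} [CommRing R] [Algebra ℚ R]
    (A : Matrix (Fin 6) (Fin 3) R) (B : Matrix (Fin 6) (Fin 2) R) :
    (144 : R) * (amalgam63 A B).det =
      ∑ σ : Equiv.Perm (Fin 6),
        (Equiv.Perm.sign σ : ℤ) •
          ((Matrix.of ![A (σ 0), A (σ 1), A (σ 2)]).det *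
            (Matrix.of ![A (σ 3), A (σ 4), A (σ 5)]).det *
            (Matrix.of ![B (σ 0), B (σ 3)]).det *
            (Matrix.of ![B (σ 1), B (σ 4)]).det *
            (Matrix.of ![B (σ 2), B (σ 5)]).det) := by
  have h1 : (∑ σ : Equiv.Perm (Fin 6),
        (Equiv.Perm.sign σ : ℤ) •
          ((Matrix.of ![A (σ 0), A (σ 1), A (σ 2)]).det *
            (Matrix.of ![A (σ 3), A (σ 4), A (σ 5)]).det *
            (Matrix.of ![B (σ 0), B (σ 3)]).det *
            (Matrix.of ![B (σ 1), B (σ 4)]).det *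
            (Matrix.of ![B (σ 2), B (σ 5)]).det))
      = ∑ σ : Equiv.Perm (Fin 6), ∑ t : AmalgamAux.TT,
          AmalgamAux.eta t • ((Equiv.Perm.sign σ : ℤ) •
            ∏ p, amalgam63 A B (σ p) (AmalgamAux.vfun t p)) := by
    refine Finset.sum_congr rfl fun σ _ => ?_
    refine (congrArg (fun x => ((Equiv.Perm.sign σ : ℤ)) • x)
      (AmalgamAux.stepA A B σ)).trans ?_
    rw [Finset.smul_sum]
    exact Finset.sum_congr rfl fun t _ => smul_comm _ _ _
  have h2 : (∑ σ : Equiv.Perm (Fin 6), ∑ t : AmalgamAux.TT,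
          AmalgamAux.eta t • ((Equiv.Perm.sign σ : ℤ) •
            ∏ p, amalgam63 A B (σ p) (AmalgamAux.vfun t p)))
      = ∑ t : AmalgamAux.TT, AmalgamAux.eta t •
          ∑ σ : Equiv.Perm (Fin 6), (Equiv.Perm.sign σ : ℤ) •
            ∏ p, amalgam63 A B (σ p) (AmalgamAux.vfun t p) := by
    rw [Finset.sum_comm]
    exact Finset.sum_congr rfl fun t _ => (Finset.smul_sum).symm
  have h3 : ∀ t : AmalgamAux.TT,
      (∑ σ : Equiv.Perm (Fin 6), (Equiv.Perm.sign σ : ℤ) •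
          ∏ p, amalgam63 A B (σ p) (AmalgamAux.vfun t p))
        = ((amalgam63 A B).submatrix id (AmalgamAux.vfun t)).det := by
    intro t
    rw [Matrix.det_apply]
    refine Finset.sum_congr rfl fun σ _ => ?_
    simp [Matrix.submatrix_apply, Units.smul_def]
  have h4 : ∑ t : AmalgamAux.TT,
        AmalgamAux.eta t • ((amalgam63 A B).submatrix id (AmalgamAux.vfun t)).det
      = ∑ t : AmalgamAux.TT,
          (AmalgamAux.eta t * AmalgamAux.kappa t) • (amalgam63 A B).det := by
    refine Finset.sum_congr rfl fun t _ => ?_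
    rw [AmalgamAux.stepC, smul_smul]
  have h5 : ∑ t : AmalgamAux.TT,
        (AmalgamAux.eta t * AmalgamAux.kappa t) • (amalgam63 A B).det
      = (144 : R) * (amalgam63 A B).det := by
    rw [← Finset.sum_smul, AmalgamAux.key_sum, zsmul_eq_mul]
    norm_num
  rw [h1, h2]
  simp_rw [h3]
  rw [h4, h5]
end

section
/- Let A, B be 4×2 matrices over a commutative ring and let A⋆B be the 4×4 row-wise Kronecker amalgam. If rows i and j of A are equal and rows i and j of B are equal (for some i ≠ j), then det(A⋆B) = 0; moreover, this follows from the two-term formula det(A⋆B) = det A_{12} det A_{34} det B_{13} det B_{24} − det A_{13} det A_{24} det B_{12} det B_{34}. -/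
section Amalgam42

variable {R : Type*} [CommRing R] (A B : Matrix (Fin 4) (Fin 2) R)

theorem amalgam42_eq_of :
    amalgam42 A B =
      Matrix.of fun i => ![A i 0 * B i 0, A i 1 * B i 0, A i 0 * B i 1, A i 1 * B i 1] := by
  ext i k
  fin_cases k <;> rfl

theorem det_amalgam42 :
    (amalgam42 A B).det =
      (Matrix.of ![A 0, A 1]).det * (Matrix.of ![A 2, A 3]).det *
        (Matrix.of ![B 0, B 2]).det * (Matrix.of ![B 1, B 3]).det
      - (Matrix.of ![A 0, A 2]).det * (Matrix.of ![A 1, A 3]).det *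
        (Matrix.of ![B 0, B 1]).det * (Matrix.of ![B 2, B 3]).det := by
  rw [amalgam42_eq_of, Matrix.det_succ_row_zero]
  simp only [Fin.sum_univ_four, Matrix.det_fin_three, Matrix.det_fin_two, Matrix.submatrix_apply,
    Matrix.of_apply, Fin.succAbove, Fin.reduceLT, Fin.reduceSucc, Fin.reduceCastSucc,
    ↓reduceIte, Matrix.cons_val, Fin.coe_ofNat_eq_mod]
  ring

theorem det_amalgam42_eq_zero_of_rows_eq {i j : Fin 4} (hij : i ≠ j) (hA : A i = A j)
    (hB : B i = B j) : (amalgam42 A B).det = 0 :=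
  Matrix.det_zero_of_row_eq hij <| funext fun k => by simp only [amalgam42, Matrix.of_apply, hA, hB]

end Amalgam42

theorem stmt_14 {R : Type*} [CommRing R] (A B : Matrix (Fin 4) (Fin 2) R)
    (i j : Fin 4) (hij : i ≠ j) (hA : A i = A j) (hB : B i = B j) :
    (amalgam42 A B).det = 0 ∧
      (amalgam42 A B).det =
        (Matrix.of ![A 0, A 1]).det * (Matrix.of ![A 2, A 3]).det *
          (Matrix.of ![B 0, B 2]).det * (Matrix.of ![B 1, B 3]).det
        - (Matrix.of ![A 0, A 2]).det * (Matrix.of ![A 1, A 3]).det *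
          (Matrix.of ![B 0, B 1]).det * (Matrix.of ![B 2, B 3]).det :=
  ⟨det_amalgam42_eq_zero_of_rows_eq A B hij hA hB, det_amalgam42 A B⟩
end

section
/- Let K_1 ⊆ ℂ and K_2 ⊆ ℂ be nonempty compact sets and K = K_1 × K_2 ⊆ ℂ². For points z_1,…,z_4 ∈ K with z_i = (x_i, y_i), the modulus of det V_{(2,2)}(z_1,…,z_4) (the matrix with rows (1, x_i, y_i, x_i y_i)) is at most 2·M_1²·M_2², where M_1 = sup over pairs (a,b) ∈ K_1² of |b−a| is the diameter of K_1 and M_2 is the diameter of K_2. -/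
/-!
Subtracting rows and expanding, the determinant of the matrix with rows `(1, xᵢ, yᵢ, xᵢ yᵢ)`
collapses to the difference of two products, each made of two differences of `x`-coordinates
and two differences of `y`-coordinates. Each difference of `x`'s is bounded by `diam K₁` and each
difference of `y`'s by `diam K₂`, so the triangle inequality gives `2 (diam K₁)² (diam K₂)²`.
-/

theorem det_bilinearVandermonde {R : Type*} [CommRing R] (x y : Fin 4 → R) :
    (Matrix.of fun i j => ![1, x i, y i, x i * y i] j : Matrix (Fin 4) (Fin 4) R).det =
      (x 1 - x 0) * (x 3 - x 2) * (y 2 - y 0) * (y 3 - y 1) -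
        (x 2 - x 0) * (x 3 - x 1) * (y 1 - y 0) * (y 3 - y 2) := by
  simp [Matrix.det_succ_row_zero, Fin.sum_univ_succ, Fin.succAbove]
  ring

theorem norm_det_bilinearVandermonde_le {R : Type*} [SeminormedCommRing R] (x y : Fin 4 → R)
    {A B : ℝ} (hx : ∀ i j, ‖x i - x j‖ ≤ A) (hy : ∀ i j, ‖y i - y j‖ ≤ B) :
    ‖(Matrix.of fun i j => ![1, x i, y i, x i * y i] j : Matrix (Fin 4) (Fin 4) R).det‖ ≤
      2 * A ^ 2 * B ^ 2 := by
  have hprod : ∀ a b c d : R, ‖a‖ ≤ A → ‖b‖ ≤ A → ‖c‖ ≤ B → ‖d‖ ≤ B →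
      ‖a * b * c * d‖ ≤ A * A * B * B := fun a b c d ha hb hc hd =>
    norm_mul_le_of_le (norm_mul_le_of_le (norm_mul_le_of_le ha hb) hc) hd
  rw [det_bilinearVandermonde]
  calc _ ≤ A * A * B * B + A * A * B * B :=
        (norm_sub_le _ _).trans (add_le_add (hprod _ _ _ _ (hx _ _) (hx _ _) (hy _ _) (hy _ _))
          (hprod _ _ _ _ (hx _ _) (hx _ _) (hy _ _) (hy _ _)))
    _ = 2 * A ^ 2 * B ^ 2 := by ring

theorem stmt_17_general (K₁ K₂ : Set ℂ) (hK₁c : IsCompact K₁) (hK₂c : IsCompact K₂)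
    (z : Fin 4 → ℂ × ℂ)
    (hz : ∀ i, z i ∈ K₁ ×ˢ K₂) :
    ‖(Matrix.of fun i j =>
            ![1, (z i).1, (z i).2, (z i).1 * (z i).2] j : Matrix (Fin 4) (Fin 4) ℂ).det‖ ≤
      2 * Metric.diam K₁ ^ 2 * Metric.diam K₂ ^ 2 := by
  refine norm_det_bilinearVandermonde_le (fun i => (z i).1) (fun i => (z i).2)
    (fun i j => ?_) (fun i j => ?_)
  · rw [← dist_eq_norm]
    exact Metric.dist_le_diam_of_mem hK₁c.isBounded (hz i).1 (hz j).1
  · rw [← dist_eq_norm]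
    exact Metric.dist_le_diam_of_mem hK₂c.isBounded (hz i).2 (hz j).2

theorem stmt_17 (K₁ K₂ : Set ℂ) (hK₁c : IsCompact K₁) (hK₂c : IsCompact K₂)
    (hK₁ : K₁.Nonempty) (hK₂ : K₂.Nonempty) (z : Fin 4 → ℂ × ℂ)
    (hz : ∀ i, z i ∈ K₁ ×ˢ K₂) :
    ‖(Matrix.of fun i j =>
            ![1, (z i).1, (z i).2, (z i).1 * (z i).2] j : Matrix (Fin 4) (Fin 4) ℂ).det‖ ≤
      2 * Metric.diam K₁ ^ 2 * Metric.diam K₂ ^ 2 :=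
  stmt_17_general K₁ K₂ hK₁c hK₂c z hz
end

section
/- Let C be an m×m matrix over ℂ and D an n×n matrix over ℂ. If points z_{i+(j−1)m} ∈ ℂ^r are defined for 1 ≤ i ≤ m, 1 ≤ j ≤ n by pairing z'_i ∈ ℂ^k with z''_j ∈ ℂ^{r−k}, then the multivariable Vandermonde matrix V_{(N_1,…,N_r)} on these mn points, with m = N_1⋯N_k and n = N_{k+1}⋯N_r, equals the Kronecker tensor product of V_{(N_1,…,N_k)}(z'_1,…,z'_m) and V_{(N_{k+1},…,N_r)}(z''_1,…,z''_n), and hence its determinant equals det V_{(N_1,…,N_k)}(z'_•)^n · det V_{(N_{k+1},…,N_r)}(z''_•)^m. -/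
section
variable {r k : ℕ} (N : Fin r → ℕ) (hkr : k < r)

/-- Multidegrees `≤ (N_1 - 1, …, N_k - 1)` of monomials in the first `k` variables. -/
abbrev VdmIdx1 : Type := ∀ l : Fin k, Fin (N (Fin.castLE hkr.le l))

/-- Multidegrees `≤ (N_{k+1} - 1, …, N_r - 1)` of monomials in the last `r - k` variables. -/
abbrev VdmIdx2 : Type := ∀ l : Fin (r - k), Fin (N ⟨k + l.val, by omega⟩)

/-- The multivariable Vandermonde matrix `V_{(N_1,…,N_k)}` on points `z'` indexed by
`VdmIdx1`, with columns indexed by monomial multidegrees. -/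
def vdm1 (z' : VdmIdx1 N hkr → Fin k → ℂ) : Matrix (VdmIdx1 N hkr) (VdmIdx1 N hkr) ℂ :=
  Matrix.of fun i e => ∏ l, z' i l ^ (e l : ℕ)

/-- The multivariable Vandermonde matrix `V_{(N_{k+1},…,N_r)}` on points `z''`. -/
def vdm2 (z'' : VdmIdx2 N hkr → Fin (r - k) → ℂ) :
    Matrix (VdmIdx2 N hkr) (VdmIdx2 N hkr) ℂ :=
  Matrix.of fun j f => ∏ l, z'' j l ^ (f l : ℕ)

/-- The full multivariable Vandermonde matrix `V_{(N_1,…,N_r)}` on the `mn` product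
points `z_{(i,j)} = (z'_i, z''_j)` (the pair `(i,j)` corresponds to `i + (j-1)m`). -/
def vdmFull (z' : VdmIdx1 N hkr → Fin k → ℂ) (z'' : VdmIdx2 N hkr → Fin (r - k) → ℂ) :
    Matrix (VdmIdx1 N hkr × VdmIdx2 N hkr) (VdmIdx1 N hkr × VdmIdx2 N hkr) ℂ :=
  Matrix.of fun p q => (∏ l, z' p.1 l ^ (q.1 l : ℕ)) * ∏ l, z'' p.2 l ^ (q.2 l : ℕ)

/-- on a product grid of points, the multivariable Vandermonde matrix is
the Kronecker tensor product of the two smaller Vandermonde matrices, and hence its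
determinant is `det V_{(N_1,…,N_k)}^n * det V_{(N_{k+1},…,N_r)}^m` where
`m = N_1⋯N_k` and `n = N_{k+1}⋯N_r`. -/
theorem stmt_18 (hN : ∀ i, 2 ≤ N i) (hk1 : 1 ≤ k)
    (z' : VdmIdx1 N hkr → Fin k → ℂ) (z'' : VdmIdx2 N hkr → Fin (r - k) → ℂ) :
    vdmFull N hkr z' z'' =
        Matrix.kroneckerMap (· * ·) (vdm1 N hkr z') (vdm2 N hkr z'') ∧
      (vdmFull N hkr z' z'').det =
        (vdm1 N hkr z').det ^ (∏ l : Fin (r - k), N ⟨k + l.val, by omega⟩) *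
          (vdm2 N hkr z'').det ^ (∏ l : Fin k, N (Fin.castLE hkr.le l)) := by
  have heq : vdmFull N hkr z' z'' =
      Matrix.kroneckerMap (· * ·) (vdm1 N hkr z') (vdm2 N hkr z'') := rfl
  refine ⟨heq, ?_⟩
  rw [heq]
  rw [show Matrix.kroneckerMap (· * ·) (vdm1 N hkr z') (vdm2 N hkr z'')
      = Matrix.kroneckerMap (HMul.hMul) (vdm1 N hkr z') (vdm2 N hkr z'') from rfl,
    Matrix.det_kronecker]
  congr 1 <;> congr 1 <;> simp [Fintype.card_pi]

end
end

section
/- For the 5×5 matrix with i-th row (x_i, y_i, x_i², x_i y_i, y_i²), i = 1,…,5, its determinant equals V_{1,2,5}·c_{1,3}c_{2,4}·y_5(x_4−x_3) + V_{1,2,3}·c_{1,4}c_{2,5}·y_3(x_5−x_4) + V_{1,2,3}·c_{1,2}c_{3,4}·y_5(x_5−x_4) + V_{1,3,4}·c_{1,2}c_{3,5}·y_4(x_5−x_2) − V_{1,3,5}·c_{1,2}c_{3,4}·y_5(x_4−x_2) − V_{1,2,4}·c_{1,3}c_{2,5}·y_4(x_5−x_3), up to an overall sign, where V_{i,j,k}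 = det of the 3×3 matrix with rows (1, x_a, y_a) for a = i,j,k, and c_{i,j} = x_i y_j − x_j y_i. -/
set_option maxHeartbeats 2000000 in
theorem stmt_19 {R : Type*} [CommRing R] (x y : Fin 5 → R) :
    let V : Fin 5 → Fin 5 → Fin 5 → R := fun i j k =>
      (Matrix.of ![![1, x i, y i], ![1, x j, y j], ![1, x k, y k]]).det
    let c : Fin 5 → Fin 5 → R := fun i j => x i * y j - x j * y i
    let S :=
      V 0 1 4 * (c 0 2 * c 1 3) * (y 4 * (x 3 - x 2))
        + V 0 1 2 * (c 0 3 * c 1 4) * (y 2 * (x 4 - x 3))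
        + V 0 1 2 * (c 0 1 * c 2 3) * (y 4 * (x 4 - x 3))
        + V 0 2 3 * (c 0 1 * c 2 4) * (y 3 * (x 4 - x 1))
        - V 0 2 4 * (c 0 1 * c 2 3) * (y 4 * (x 3 - x 1))
        - V 0 1 3 * (c 0 2 * c 1 4) * (y 3 * (x 4 - x 2))
    (Matrix.of fun i j => ![x i, y i, x i ^ 2, x i * y i, y i ^ 2] j :
        Matrix (Fin 5) (Fin 5) R).det = S ∨
      (Matrix.of fun i j => ![x i, y i, x i ^ 2, x i * y i, y i ^ 2] j :
        Matrix (Fin 5) (Fin 5) R).det = -S := by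
  right
  have hM : (Matrix.of fun i j => ![x i, y i, x i ^ 2, x i * y i, y i ^ 2] j :
      Matrix (Fin 5) (Fin 5) R) =
      !![x 0, y 0, x 0 ^ 2, x 0 * y 0, y 0 ^ 2;
         x 1, y 1, x 1 ^ 2, x 1 * y 1, y 1 ^ 2;
         x 2, y 2, x 2 ^ 2, x 2 * y 2, y 2 ^ 2;
         x 3, y 3, x 3 ^ 2, x 3 * y 3, y 3 ^ 2;
         x 4, y 4, x 4 ^ 2, x 4 * y 4, y 4 ^ 2] := by
    ext i j
    fin_cases i <;> fin_cases j <;> rfl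
  rw [hM]
  simp only [Matrix.det_succ_row_zero, Fin.sum_univ_succ, Matrix.det_fin_three,
    Matrix.submatrix_apply, Matrix.of_apply, Fin.sum_univ_zero, Fin.succAbove,
    Matrix.cons_val', Matrix.cons_val_zero, Matrix.cons_val_one, Matrix.head_cons,
    Matrix.head_fin_const, Matrix.cons_val_fin_one, Matrix.empty_val',
    Fin.val_zero, Fin.val_succ, Matrix.cons_val_succ]
  norm_num [Fin.lt_def, Fin.succ]
  ring
end
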